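/- For every m ∈ ℕ, every rational direction ν ∈ S¹∩ℚ² and all real θ < λ, the infimal minimizers coincide: u_{m,ν}^{θ,λ} = u_{1,ν}^{θ,λ} (absence of symmetry breaking). -/

import Mathlib

open scoped ENNReal Classical

/-- The canonical embedding of `ℤ³` into Euclidean `ℝ³`. -/
noncomputable def toR3 (x : ℤ × ℤ × ℤ) : EuclideanSpace ℝ (Fin 3) :=
  (WithLp.equiv 2 (Fin 3 → ℝ)).symm ![(x.1 : ℝ), (x.2.1 : ℝ), (x.2.2 : ℝ)]

/-- The canonical embedding of `ℤ²` into Euclidean `ℝ²`. -/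
noncomputable def toR2 (x : ℤ × ℤ) : EuclideanSpace ℝ (Fin 2) :=
  (WithLp.equiv 2 (Fin 2 → ℝ)).symm ![(x.1 : ℝ), (x.2 : ℝ)]

/-- Membership in the slab `ℤ²_M = ℤ² × {0,…,M}`. -/
def inSlab (M : ℕ) (x : ℤ × ℤ × ℤ) : Prop := 0 ≤ x.2.2 ∧ x.2.2 ≤ (M : ℤ)

/-- The energy `E_M(u,Γ) = ∑_{x ∈ Γ_M} ∑_{y ∈ ℤ²_M} c(x-y)|u(x)-u(y)|`, valued in `[0,∞]`. -/
noncomputable def energyM (M : ℕ) (c : EuclideanSpace ℝ (Fin 3) → ℝ)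
    (u : ℤ × ℤ × ℤ → ℝ) (Γ : Set (ℤ × ℤ)) : ℝ≥0∞ :=
  ∑' x : ℤ × ℤ × ℤ, ∑' y : ℤ × ℤ × ℤ,
    if (x.1, x.2.1) ∈ Γ ∧ inSlab M x ∧ inSlab M y then
      ENNReal.ofReal (c (toR3 x - toR3 y) * |u x - u y|) else 0

/-- A direction `ν ∈ S¹` is rational if both its components are rational numbers. -/
def IsRationalDir (ν : EuclideanSpace ℝ (Fin 2)) : Prop :=
  ∃ a b : ℚ, ν 0 = (a : ℝ) ∧ ν 1 = (b : ℝ)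

/-- The `ℤ`-module `ℤ_ν = {z ∈ ℤ² : ⟨z,ν⟩ = 0}`. -/
def Znu (ν : EuclideanSpace ℝ (Fin 2)) : Set (ℤ × ℤ) :=
  {z | @inner ℝ _ _ (toR2 z) ν = 0}

/-- The set `mℤ_ν` of `m`-fold multiples of elements of `ℤ_ν`. -/
def mZnu (m : ℕ) (ν : EuclideanSpace ℝ (Fin 2)) : Set (ℤ × ℤ) :=
  {z | ∃ w ∈ Znu ν, z = ((m : ℤ) * w.1, (m : ℤ) * w.2)}

/-- `F` is a fundamental domain of `ℤ²/mℤ_ν`: every `z ∈ ℤ²` is uniquely `z₁ + z₂` with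
`z₁ ∈ mℤ_ν` and `z₂ ∈ F`. -/
def IsFundDomain (m : ℕ) (ν : EuclideanSpace ℝ (Fin 2)) (F : Set (ℤ × ℤ)) : Prop :=
  ∀ z : ℤ × ℤ, ∃! w : ℤ × ℤ, w ∈ F ∧ z - w ∈ mZnu m ν

/-- `u : ℤ²_M → {±1}` is `(m,ν)`-periodic. -/
def PeriodicMN (M m : ℕ) (ν : EuclideanSpace ℝ (Fin 2)) (u : ℤ × ℤ × ℤ → ℝ) : Prop :=
  ∀ x : ℤ × ℤ × ℤ, inSlab M x → ∀ z ∈ Znu ν,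
    u (x.1 + (m : ℤ) * z.1, x.2.1 + (m : ℤ) * z.2, x.2.2) = u x

/-- The class `A_{m,ν}^{θ,λ}` of `(m,ν)`-periodic `{±1}`-configurations with `u = 1` below
level `θ` and `u = -1` above level `λ` (levels measured by `⟨P₂·,ν⟩`). -/
def AdmissibleA (M m : ℕ) (ν : EuclideanSpace ℝ (Fin 2)) (θ lam : ℝ)
    (u : ℤ × ℤ × ℤ → ℝ) : Prop :=
  (∀ x, inSlab M x → u x = 1 ∨ u x = -1) ∧
  PeriodicMN M m ν u ∧
  (∀ x, inSlab M x → @inner ℝ _ _ (toR2 (x.1, x.2.1)) ν < θ → u x = 1) ∧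
  (∀ x, inSlab M x → lam < @inner ℝ _ _ (toR2 (x.1, x.2.1)) ν → u x = -1)

/-- Membership in the class `M_{m,ν}^{θ,λ}` of minimizers of `E_M(·,F_{m,ν})` in
`A_{m,ν}^{θ,λ}`. -/
def IsMinA (M : ℕ) (c : EuclideanSpace ℝ (Fin 3) → ℝ) (m : ℕ)
    (ν : EuclideanSpace ℝ (Fin 2)) (θ lam : ℝ) (F : Set (ℤ × ℤ))
    (u : ℤ × ℤ × ℤ → ℝ) : Prop :=
  AdmissibleA M m ν θ lam u ∧
  ∀ v, AdmissibleA M m ν θ lam v → energyM M c u F ≤ energyM M c v F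

/-- `u` is the infimal minimizer `u_{m,ν}^{θ,λ}`: the pointwise least element (on the slab)
of the class of minimizers `M_{m,ν}^{θ,λ}`. -/
def IsInfMinA (M : ℕ) (c : EuclideanSpace ℝ (Fin 3) → ℝ) (m : ℕ)
    (ν : EuclideanSpace ℝ (Fin 2)) (θ lam : ℝ) (F : Set (ℤ × ℤ))
    (u : ℤ × ℤ × ℤ → ℝ) : Prop :=
  IsMinA M c m ν θ lam F u ∧
  ∀ v, IsMinA M c m ν θ lam F v → ∀ x, inSlab M x → u x ≤ v x

/-!
Translating the infimal `(m,ν)`-minimizer by any `g ∈ ℤ_ν` yields another `(m,ν)`-minimizer,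
because the energy of an `mℤ_ν`-periodic configuration does not depend on the fundamental domain
over which it is summed. Being the least minimizer, it lies below all of its translates, hence is
`ℤ_ν`-periodic. For `ℤ_ν`-periodic configurations
`E_M(·, F_{m,ν}) = [ℤ_ν : mℤ_ν] · E_M(·, F_{1,ν})`, and the index is finite since `ℤ_ν` is
saturated in `ℤ²` (`mℤ_ν = ℤ_ν ∩ mℤ²`). So `u_{m,ν}` is a `(1,ν)`-minimizer and `u_{1,ν}` an
`(m,ν)`-minimizer, and the two minimality properties give `u_{m,ν} ≤ u_{1,ν} ≤ u_{m,ν}`.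
-/

section Transversal

variable {G : Type*} [AddCommGroup G]

def IsTransversal (K : AddSubgroup G) (F : Set G) : Prop :=
  ∀ z, ∃! w, w ∈ F ∧ z - w ∈ K

namespace IsTransversal

variable {K H : AddSubgroup G} {F F' : Set G}

noncomputable def rep (hF : IsTransversal K F) (z : G) : G :=
  (hF z).exists.choose

lemma rep_mem (hF : IsTransversal K F) (z : G) : hF.rep z ∈ F :=
  (hF z).exists.choose_spec.1

lemma sub_rep_mem (hF : IsTransversal K F) (z : G) : z - hF.rep z ∈ K :=
  (hF z).exists.choose_spec.2

lemma eq_rep (hF : IsTransversal K F) {z w : G} (hw : w ∈ F) (hzw : z - w ∈ K) :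
    w = hF.rep z :=
  (hF z).unique ⟨hw, hzw⟩ ⟨hF.rep_mem z, hF.sub_rep_mem z⟩

lemma image_add_const (hF : IsTransversal K F) (g : G) : IsTransversal K ((· + g) '' F) := by
  have hsub : ∀ z v, z - (v + g) = z - g - v := fun z v => by abel
  intro z
  refine ⟨hF.rep (z - g) + g, ⟨⟨_, hF.rep_mem _, rfl⟩, ?_⟩, ?_⟩
  · rw [hsub]; exact hF.sub_rep_mem _
  · rintro _ ⟨⟨v, hv, rfl⟩, hzv⟩
    rw [hsub] at hzv
    rw [← hF.eq_rep hv hzv]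

noncomputable def equivProdQuotient (hKH : K ≤ H) (hK : IsTransversal K F)
    (hH : IsTransversal H F') : F ≃ F' × (H ⧸ K.addSubgroupOf H) where
  toFun z := (⟨hH.rep z, hH.rep_mem z⟩, (⟨z - hH.rep z, hH.sub_rep_mem z⟩ : H))
  invFun p := ⟨hK.rep (p.1 + (p.2.out : G)), hK.rep_mem _⟩
  left_inv z := by
    have hout := QuotientAddGroup.eq.mp
      (QuotientAddGroup.out_eq'
        (((⟨z - hH.rep z, hH.sub_rep_mem z⟩ : H)) : H ⧸ K.addSubgroupOf H))
    rw [AddSubgroup.mem_addSubgroupOf] at hout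
    refine Subtype.ext (hK.eq_rep z.2 ?_).symm
    convert K.neg_mem hout using 1
    push_cast
    abel
  right_inv p := by
    obtain ⟨w, q⟩ := p
    set z := hK.rep (w + (q.out : G))
    have hzw : z - w ∈ H := by
      convert H.sub_mem q.out.2 (hKH (hK.sub_rep_mem (w + (q.out : G)))) using 1
      abel
    have hrep : hH.rep z = w := (hH.eq_rep w.2 hzw).symm
    ext1
    · exact Subtype.ext hrep
    · conv_rhs => rw [← QuotientAddGroup.out_eq' q]
      refine QuotientAddGroup.eq.mpr ?_
      rw [AddSubgroup.mem_addSubgroupOf]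
      convert hK.sub_rep_mem (w + (q.out : G)) using 1
      push_cast
      rw [hrep]
      abel

lemma tsum_eq_card_mul (hKH : K ≤ H) (hK : IsTransversal K F) (hH : IsTransversal H F')
    (f : G → ℝ≥0∞) (hf : ∀ z, ∀ h ∈ H, f (z + h) = f z) :
    ∑' z : F, f z = ENat.card (H ⧸ K.addSubgroupOf H) * ∑' w : F', f w := by
  rw [← (equivProdQuotient hKH hK hH).symm.tsum_eq, ENNReal.tsum_prod', ← ENNReal.tsum_mul_left]
  refine tsum_congr fun w => ?_
  rw [← ENNReal.tsum_const]
  refine tsum_congr fun q => ?_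
  have hmem : hK.rep (w + (q.out : G)) - w ∈ H := by
    convert H.sub_mem q.out.2 (hKH (hK.sub_rep_mem (w + (q.out : G)))) using 1
    abel
  change f (hK.rep _) = f w
  simpa using hf w _ hmem

lemma tsum_eq (hK : IsTransversal K F) (hK' : IsTransversal K F') (f : G → ℝ≥0∞)
    (hf : ∀ z, ∀ h ∈ K, f (z + h) = f z) :
    ∑' z : F, f z = ∑' w : F', f w := by
  have : Subsingleton (K ⧸ K.addSubgroupOf K) := by
    rw [AddSubgroup.addSubgroupOf_self]; exact QuotientAddGroup.subsingleton_quotient_top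
  have hcard : ENat.card (K ⧸ K.addSubgroupOf K) = 1 :=
    ENat.card_eq_one_iff_unique.mpr ⟨uniqueOfSubsingleton 0⟩
  rw [hK.tsum_eq_card_mul le_rfl hK' f hf, hcard, ENat.toENNReal_one, one_mul]

end IsTransversal

end Transversal

section Lattice

variable {ν : EuclideanSpace ℝ (Fin 2)} {m : ℕ}

lemma toR2_add (a b : ℤ × ℤ) : toR2 (a + b) = toR2 a + toR2 b := by
  ext i; fin_cases i <;> simp [toR2]

lemma toR2_zero : toR2 0 = 0 := by
  ext i; fin_cases i <;> simp [toR2]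

noncomputable def pairingNu (ν : EuclideanSpace ℝ (Fin 2)) : ℤ × ℤ →+ ℝ where
  toFun z := inner ℝ (toR2 z) ν
  map_zero' := by rw [toR2_zero, inner_zero_left]
  map_add' a b := by rw [toR2_add, inner_add_left]

noncomputable def latticeNu (ν : EuclideanSpace ℝ (Fin 2)) : AddSubgroup (ℤ × ℤ) :=
  (pairingNu ν).ker

noncomputable def scaledLatticeNu (m : ℕ) (ν : EuclideanSpace ℝ (Fin 2)) : AddSubgroup (ℤ × ℤ) :=
  (latticeNu ν).map (nsmulAddMonoidHom m)

lemma mem_latticeNu {z : ℤ × ℤ} : z ∈ latticeNu ν ↔ z ∈ Znu ν := Iff.rfl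

lemma mem_scaledLatticeNu {k : ℤ × ℤ} : k ∈ scaledLatticeNu m ν ↔ k ∈ mZnu m ν := by
  simp [scaledLatticeNu, mZnu, mem_latticeNu, eq_comm, Prod.ext_iff]

lemma scaledLatticeNu_one : scaledLatticeNu 1 ν = latticeNu ν := by
  ext; simp [scaledLatticeNu]

lemma scaledLatticeNu_le : scaledLatticeNu m ν ≤ latticeNu ν := by
  rintro _ ⟨w, hw, rfl⟩
  exact (latticeNu ν).nsmul_mem hw m

lemma isTransversal_iff_isFundDomain {F : Set (ℤ × ℤ)} :
    IsTransversal (scaledLatticeNu m ν) F ↔ IsFundDomain m ν F := by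
  simp only [IsTransversal, IsFundDomain, mem_scaledLatticeNu]

lemma mem_scaledLatticeNu_iff_dvd (hm : m ≠ 0) {h : ℤ × ℤ} (hh : h ∈ latticeNu ν) :
    h ∈ scaledLatticeNu m ν ↔ (m : ℤ) ∣ h.1 ∧ (m : ℤ) ∣ h.2 := by
  constructor
  · rintro ⟨w, -, rfl⟩
    simp
  · rintro ⟨⟨a, ha⟩, ⟨b, hb⟩⟩
    have hmab : h = m • (a, b) := by simp [Prod.ext_iff, ha, hb]
    refine ⟨(a, b), ?_, hmab.symm⟩
    rw [hmab, latticeNu, AddMonoidHom.mem_ker, map_nsmul, smul_eq_zero] at hh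
    exact hh.resolve_left hm

lemma finite_quotient_scaledLatticeNu (hm : m ≠ 0) :
    Finite (latticeNu ν ⧸ (scaledLatticeNu m ν).addSubgroupOf (latticeNu ν)) := by
  have : NeZero m := ⟨hm⟩
  let φ : latticeNu ν →+ ZMod m × ZMod m :=
    ((Int.castAddHom (ZMod m)).prodMap (Int.castAddHom (ZMod m))).comp (latticeNu ν).subtype
  have hker : (scaledLatticeNu m ν).addSubgroupOf (latticeNu ν) = φ.ker := by
    ext ⟨h, hh⟩
    simp [φ, AddSubgroup.mem_addSubgroupOf, mem_scaledLatticeNu_iff_dvd hm hh,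
      Prod.ext_iff, ZMod.intCast_zmod_eq_zero_iff_dvd]
  rw [hker]
  exact Finite.of_injective _ (QuotientAddGroup.kerLift_injective φ)

end Lattice

section Slab

def horiz : ℤ × ℤ →+ ℤ × ℤ × ℤ where
  toFun g := (g.1, g.2, 0)
  map_zero' := rfl
  map_add' a b := by simp

lemma add_horiz (x : ℤ × ℤ × ℤ) (g : ℤ × ℤ) : x + horiz g = (x.1 + g.1, x.2.1 + g.2, x.2.2) :=
  Prod.ext rfl (Prod.ext rfl (add_zero _))

lemma inSlab_add_horiz {M : ℕ} {x : ℤ × ℤ × ℤ} (g : ℤ × ℤ) :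
    inSlab M (x + horiz g) ↔ inSlab M x := by
  simp [inSlab, horiz]

lemma toR3_add (x y : ℤ × ℤ × ℤ) : toR3 (x + y) = toR3 x + toR3 y := by
  ext i; fin_cases i <;> simp [toR3]

def horizShift (g : ℤ × ℤ) (u : ℤ × ℤ × ℤ → ℝ) : ℤ × ℤ × ℤ → ℝ :=
  fun x => u (x - horiz g)

variable {M m : ℕ} {ν : EuclideanSpace ℝ (Fin 2)} {u : ℤ × ℤ × ℤ → ℝ}

lemma periodicMN_iff : PeriodicMN M m ν u ↔
    ∀ x, inSlab M x → ∀ k ∈ scaledLatticeNu m ν, u (x + horiz k) = u x := by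
  simp only [PeriodicMN, mem_scaledLatticeNu, mZnu]
  constructor
  · rintro hu x hx _ ⟨w, hw, rfl⟩
    simpa [add_horiz] using hu x hx w hw
  · intro hu x hx w hw
    simpa [add_horiz] using hu x hx _ ⟨w, hw, rfl⟩

lemma PeriodicMN.of_dvd {m' : ℕ} (hu : PeriodicMN M m ν u) (hmm' : m ∣ m') :
    PeriodicMN M m' ν u := by
  obtain ⟨d, rfl⟩ := hmm'
  intro x hx z hz
  simpa [mul_assoc] using hu x hx (d • z) ((latticeNu ν).nsmul_mem hz d)

lemma PeriodicMN.horizShift (hu : PeriodicMN M m ν u) (g : ℤ × ℤ) :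
    PeriodicMN M m ν (horizShift g u) := by
  rw [periodicMN_iff] at hu ⊢
  intro x hx k hk
  simp only [_root_.horizShift, add_sub_right_comm]
  exact hu _ (by simpa [sub_eq_add_neg, ← map_neg] using (inSlab_add_horiz (-g)).mpr hx) k hk

end Slab

section Energy

variable {M m : ℕ} {c : EuclideanSpace ℝ (Fin 3) → ℝ} {ν : EuclideanSpace ℝ (Fin 2)}
  {u u' : ℤ × ℤ × ℤ → ℝ}

lemma AdmissibleA.horizShift {θ lam : ℝ} (hu : AdmissibleA M m ν θ lam u) {g : ℤ × ℤ}
    (hg : g ∈ latticeNu ν) : AdmissibleA M m ν θ lam (horizShift g u) := by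
  obtain ⟨hval, hper, hlow, hhigh⟩ := hu
  have hslab : ∀ {x}, inSlab M x → inSlab M (x - horiz g) := fun hx => by
    simpa [sub_eq_add_neg, ← map_neg] using (inSlab_add_horiz (-g)).mpr hx
  have hlevel : ∀ x : ℤ × ℤ × ℤ, pairingNu ν ((x - horiz g).1, (x - horiz g).2.1)
      = pairingNu ν (x.1, x.2.1) := fun x => by
    have : ((x - horiz g).1, (x - horiz g).2.1) = (x.1, x.2.1) - g := by
      ext <;> simp [horiz]
    rw [this, map_sub, hg, sub_zero]
  refine ⟨fun x hx => hval _ (hslab hx), PeriodicMN.horizShift hper g, fun x hx hθ => ?_,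
    fun x hx hlam => ?_⟩
  · exact hlow _ (hslab hx) ((hlevel x).trans_lt hθ)
  · exact hhigh _ (hslab hx) (hlam.trans_eq (hlevel x).symm)

lemma AdmissibleA.of_dvd {θ lam : ℝ} {m' : ℕ} (hu : AdmissibleA M m ν θ lam u) (hmm' : m ∣ m') :
    AdmissibleA M m' ν θ lam u :=
  ⟨hu.1, hu.2.1.of_dvd hmm', hu.2.2⟩

variable (M c) in
noncomputable def bondEnergy (u : ℤ × ℤ × ℤ → ℝ) (x y : ℤ × ℤ × ℤ) : ℝ≥0∞ :=
  if inSlab M x ∧ inSlab M y then ENNReal.ofReal (c (toR3 x - toR3 y) * |u x - u y|) else 0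

variable (M c) in
noncomputable def columnEnergy (u : ℤ × ℤ × ℤ → ℝ) (z : ℤ × ℤ) : ℝ≥0∞ :=
  ∑' t : ℤ, ∑' y, bondEnergy M c u (z.1, z.2, t) y

lemma energyM_eq_tsum_columnEnergy (Γ : Set (ℤ × ℤ)) :
    energyM M c u Γ = ∑' z : Γ, columnEnergy M c u z := by
  rw [energyM, tsum_subtype, ← (Equiv.prodAssoc ℤ ℤ ℤ).tsum_eq, ENNReal.tsum_prod']
  refine tsum_congr fun z => ?_
  by_cases hz : z ∈ Γ
  · simp [hz, columnEnergy, bondEnergy]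
  · simp [hz]

lemma bondEnergy_add_horiz (g : ℤ × ℤ) (h : ∀ x, inSlab M x → u' (x + horiz g) = u x)
    (x y : ℤ × ℤ × ℤ) :
    bondEnergy M c u' (x + horiz g) (y + horiz g) = bondEnergy M c u x y := by
  simp only [bondEnergy, inSlab_add_horiz, toR3_add, add_sub_add_right_eq_sub]
  split_ifs with hxy
  · rw [h x hxy.1, h y hxy.2]
  · rfl

lemma columnEnergy_add (g : ℤ × ℤ) (h : ∀ x, inSlab M x → u' (x + horiz g) = u x)
    (z : ℤ × ℤ) : columnEnergy M c u' (z + g) = columnEnergy M c u z := by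
  refine tsum_congr fun t => ?_
  rw [← (Equiv.addRight (horiz g)).tsum_eq]
  refine tsum_congr fun y => ?_
  rw [← bondEnergy_add_horiz g h]
  simp [add_horiz]

lemma PeriodicMN.columnEnergy_add (hu : PeriodicMN M m ν u) {k : ℤ × ℤ}
    (hk : k ∈ scaledLatticeNu m ν) (z : ℤ × ℤ) :
    columnEnergy M c u (z + k) = columnEnergy M c u z :=
  _root_.columnEnergy_add k (fun x hx => periodicMN_iff.mp hu x hx k hk) z

lemma energyM_eq_of_isTransversal (hu : PeriodicMN M m ν u) {F F' : Set (ℤ × ℤ)}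
    (hF : IsTransversal (scaledLatticeNu m ν) F) (hF' : IsTransversal (scaledLatticeNu m ν) F') :
    energyM M c u F = energyM M c u F' := by
  simp only [energyM_eq_tsum_columnEnergy]
  exact hF.tsum_eq hF' _ fun z k hk => hu.columnEnergy_add hk z

lemma energyM_horizShift (hu : PeriodicMN M m ν u) {F : Set (ℤ × ℤ)} (hF : IsFundDomain m ν F)
    (g : ℤ × ℤ) : energyM M c (horizShift g u) F = energyM M c u F := by
  rw [← isTransversal_iff_isFundDomain] at hF
  rw [energyM_eq_of_isTransversal (PeriodicMN.horizShift hu g) hF (hF.image_add_const g),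
    energyM_eq_tsum_columnEnergy, energyM_eq_tsum_columnEnergy,
    tsum_image _ (add_left_injective g).injOn]
  exact tsum_congr fun z => columnEnergy_add g (fun x _ => by simp [horizShift]) z

end Energy

section Minimizers

variable {M m : ℕ} {c : EuclideanSpace ℝ (Fin 3) → ℝ} {ν : EuclideanSpace ℝ (Fin 2)}
  {θ lam : ℝ} {u : ℤ × ℤ × ℤ → ℝ}

lemma energyM_eq_card_mul {Fm F1 : Set (ℤ × ℤ)} (hFm : IsFundDomain m ν Fm)
    (hF1 : IsFundDomain 1 ν F1) (hu : PeriodicMN M 1 ν u) :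
    energyM M c u Fm = ENat.card (latticeNu ν ⧸ (scaledLatticeNu m ν).addSubgroupOf (latticeNu ν))
      * energyM M c u F1 := by
  rw [← isTransversal_iff_isFundDomain] at hFm hF1
  rw [scaledLatticeNu_one] at hF1
  simp only [energyM_eq_tsum_columnEnergy]
  refine hFm.tsum_eq_card_mul scaledLatticeNu_le hF1 _ fun z k hk => ?_
  exact PeriodicMN.columnEnergy_add hu (by rwa [scaledLatticeNu_one]) z

lemma IsInfMinA.periodicMN_one {F : Set (ℤ × ℤ)} (hF : IsFundDomain m ν F)
    (hu : IsInfMinA M c m ν θ lam F u) : PeriodicMN M 1 ν u := by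
  obtain ⟨⟨hadm, hmin⟩, hleast⟩ := hu
  have hle : ∀ g ∈ latticeNu ν, ∀ x, inSlab M x → u x ≤ u (x - horiz g) := fun g hg =>
    hleast _ ⟨hadm.horizShift hg,
      fun v hv => (energyM_horizShift hadm.2.1 hF g).trans_le (hmin v hv)⟩
  rw [periodicMN_iff, scaledLatticeNu_one]
  intro x hx g hg
  refine le_antisymm ?_ ?_
  · simpa using hle g hg (x + horiz g) ((inSlab_add_horiz g).mpr hx)
  · simpa using hle (-g) (neg_mem hg) x hx

end Minimizers

theorem no_symmetry_breaking_general
    (c : EuclideanSpace ℝ (Fin 3) → ℝ)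
    (M m : ℕ) (hm : 0 < m)
    (ν : EuclideanSpace ℝ (Fin 2))
    (θ lam : ℝ)
    (Fm F1 : Set (ℤ × ℤ)) (hFm : IsFundDomain m ν Fm) (hF1 : IsFundDomain 1 ν F1)
    (um u1 : ℤ × ℤ × ℤ → ℝ)
    (hum : IsInfMinA M c m ν θ lam Fm um)
    (hu1 : IsInfMinA M c 1 ν θ lam F1 u1) :
    ∀ x, inSlab M x → um x = u1 x := by
  have hper : PeriodicMN M 1 ν um := hum.periodicMN_one hFm
  obtain ⟨⟨humAdm, humMin⟩, humLeast⟩ := hum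
  obtain ⟨⟨hu1Adm, hu1Min⟩, hu1Least⟩ := hu1
  have humAdm1 : AdmissibleA M 1 ν θ lam um := ⟨humAdm.1, hper, humAdm.2.2⟩
  have := finite_quotient_scaledLatticeNu (ν := ν) hm.ne'
  set k : ℝ≥0∞ := ↑(ENat.card (latticeNu ν ⧸ (scaledLatticeNu m ν).addSubgroupOf (latticeNu ν)))
  have hk0 : k ≠ 0 := by simp [k]
  have hktop : k ≠ ⊤ := by simpa [k]
  have hscale : ∀ u, PeriodicMN M 1 ν u → energyM M c u Fm = k * energyM M c u F1 :=
    fun u hu => energyM_eq_card_mul hFm hF1 hu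
  have hum1 : IsMinA M c 1 ν θ lam F1 um := ⟨humAdm1, fun v hv => by
    rw [← ENNReal.mul_le_mul_iff_right hk0 hktop, ← hscale um hper, ← hscale v hv.2.1]
    exact humMin v (hv.of_dvd m.one_dvd)⟩
  have hu1m : IsMinA M c m ν θ lam Fm u1 := ⟨hu1Adm.of_dvd m.one_dvd, fun v hv => calc
    energyM M c u1 Fm = k * energyM M c u1 F1 := hscale u1 hu1Adm.2.1
    _ ≤ k * energyM M c um F1 := by gcongr; exact hu1Min um humAdm1
    _ = energyM M c um Fm := (hscale um hper).symm
    _ ≤ energyM M c v Fm := humMin v hv⟩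
  exact fun x hx => le_antisymm (humLeast u1 hu1m x hx) (hu1Least um hum1 x hx)

/-- **Absence of symmetry breaking** (Lemma A.5): for every `m ≥ 1`, every rational
direction `ν ∈ S¹∩ℚ²` and all `θ < λ`, the infimal minimizers of the `(m,ν)`-periodic and
the `(1,ν)`-periodic problems coincide on the slab `ℤ²_M`. -/
theorem no_symmetry_breaking
    (L Cbar c0 : ℝ) (hL : 0 < L) (hCbar : 0 < Cbar) (hc0 : 0 < c0)
    (c : EuclideanSpace ℝ (Fin 3) → ℝ)
    (hc_nonneg : ∀ z, 0 ≤ c z)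
    (hc_bd : ∀ z, c z ≤ Cbar)
    (hc_range : ∀ z : EuclideanSpace ℝ (Fin 3), L ≤ ‖z‖ → c z = 0)
    (hc_coer : ∀ i : Fin 3,
      c0 ≤ c (EuclideanSpace.single i (1 : ℝ)) ∧ c0 ≤ c (-EuclideanSpace.single i (1 : ℝ)))
    (M m : ℕ) (hm : 0 < m)
    (ν : EuclideanSpace ℝ (Fin 2)) (hν : ‖ν‖ = 1) (hrat : IsRationalDir ν)
    (θ lam : ℝ) (hθlam : θ < lam)
    (Fm F1 : Set (ℤ × ℤ)) (hFm : IsFundDomain m ν Fm) (hF1 : IsFundDomain 1 ν F1)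
    (um u1 : ℤ × ℤ × ℤ → ℝ)
    (hum : IsInfMinA M c m ν θ lam Fm um)
    (hu1 : IsInfMinA M c 1 ν θ lam F1 u1) :
    ∀ x, inSlab M x → um x = u1 x :=
  no_symmetry_breaking_general c M m hm ν θ lam Fm F1 hFm hF1 um u1 hum hu1
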